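/- arXiv:1904.12363 — 3 statements merged into one kernel-verified Lean document; each statement's English description precedes it below -/
import Mathlib

section
/- Let X and Z be nonempty finite sets such that |Z| divides |X|. Then the family F of all functions f : X → Z satisfying |f⁻¹({z})| = |X|/|Z| for every z ∈ Z is nonempty, regular, and two-universal; in particular, for all distinct x, x' ∈ X one has |{f ∈ F : f(x) = f(x')}| · |Z| ≤ |F|. -/
open Finset


private lemma fiber_comp_perm {X Z : Type*} [Fintype X] [DecidableEq X] [DecidableEq Z]
    (f : X → Z) (σ : Equiv.Perm X) (z : Z) :
    (Finset.univ.filter fun x => f (σ x) = z).card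
      = (Finset.univ.filter fun x => f x = z).card :=
  Finset.card_equiv σ (by simp)


/-- For nonempty finite sets `X`, `Z` with `|Z| ∣ |X|`, the family of all
functions `f : X → Z` whose fibers all have size `|X|/|Z|` is nonempty, regular, and
two-universal. -/
theorem balanced_functions_two_universal (X Z : Type*) [Fintype X] [Fintype Z]
    [Nonempty X] [Nonempty Z] [DecidableEq X] [DecidableEq Z]
    (hdvd : Fintype.card Z ∣ Fintype.card X)
    (F : Finset (X → Z))
    (hF : F = Finset.univ.filter (fun f : X → Z => ∀ z : Z,
        (Finset.univ.filter (fun x : X => f x = z)).card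
          = Fintype.card X / Fintype.card Z)) :
    F.Nonempty ∧
    (∀ f ∈ F, ∀ z : Z,
        (Finset.univ.filter (fun x : X => f x = z)).card
          = Fintype.card X / Fintype.card Z) ∧
    (∀ x x' : X, x ≠ x' →
        (F.filter (fun f : X → Z => f x = f x')).card * Fintype.card Z ≤ F.card) := by
  have hm : 0 < Fintype.card Z := Fintype.card_pos
  have hn : 0 < Fintype.card X := Fintype.card_pos
  set n := Fintype.card X with hn_def
  set m := Fintype.card Z with hm_def
  set k := n / m with hk_def
  have hnk : n = m * k := (Nat.mul_div_cancel' hdvd).symm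
  have hk1 : 0 < k := Nat.div_pos (Nat.le_of_dvd hn hdvd) hm
  have hmem : ∀ f : X → Z, f ∈ F ↔
      ∀ z, (Finset.univ.filter fun x => f x = z).card = k := by
    intro f; subst hF; simp [Finset.mem_filter]
  -- Nonemptiness
  have hne : F.Nonempty := by
    have hcard : Fintype.card X = Fintype.card (Z × Fin k) := by
      rw [Fintype.card_prod, Fintype.card_fin]; exact hnk
    let e := Fintype.equivOfCardEq hcard
    refine ⟨fun x => (e x).1, (hmem _).2 ?_⟩
    intro z
    have h1 : (Finset.univ.filter fun x => (e x).1 = z).card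
        = (Finset.univ.filter fun p : Z × Fin k => p.1 = z).card :=
      Finset.card_equiv e (by simp)
    have h2 : (Finset.univ.filter fun p : Z × Fin k => p.1 = z)
        = ({z} : Finset Z) ×ˢ Finset.univ := by
      ext p; simp [Finset.mem_product, Prod.ext_iff, eq_comm]
    rw [h1, h2, Finset.card_product]
    simp
  refine ⟨hne, fun f hf z => (hmem f).1 hf z, ?_⟩
  -- two-universality
  intro x x' hxx'
  have hFclosed : ∀ f ∈ F, ∀ σ : Equiv.Perm X, (fun a => f (σ a)) ∈ F := by
    intro f hf σ
    rw [hmem]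
    intro z
    rw [fiber_comp_perm]
    exact (hmem f).1 hf z
  set B := F.filter (fun f : X → Z => f x = f x') with hB
  have key : ∀ u : X, (F.filter fun f => f (Equiv.swap x' u x) = f u).card = B.card := by
    intro u
    refine Finset.card_nbij' (fun f => f ∘ Equiv.swap x' u) (fun g => g ∘ Equiv.swap x' u)
      ?_ ?_ ?_ ?_
    · intro f hf
      rw [Finset.mem_coe, Finset.mem_filter] at hf
      rw [hB, Finset.mem_coe, Finset.mem_filter]
      refine ⟨hFclosed f hf.1 _, ?_⟩
      show f (Equiv.swap x' u x) = f (Equiv.swap x' u x')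
      rw [Equiv.swap_apply_left]
      exact hf.2
    · intro g hg
      rw [hB, Finset.mem_coe, Finset.mem_filter] at hg
      rw [Finset.mem_coe, Finset.mem_filter]
      refine ⟨hFclosed g hg.1 _, ?_⟩
      show g (Equiv.swap x' u (Equiv.swap x' u x)) = g (Equiv.swap x' u u)
      rw [Equiv.swap_apply_self, Equiv.swap_apply_right]
      exact hg.2
    · intro f _; funext a; simp [Equiv.swap_apply_self]
    · intro g _; funext a; simp [Equiv.swap_apply_self]
  have hcount : ∀ f ∈ F,
      (Finset.univ.filter fun u => f (Equiv.swap x' u x) = f u).card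
        = if f x = f x' then k else k - 1 := by
    intro f hf
    have hfib := (hmem f).1 hf
    by_cases h : f x = f x'
    · rw [if_pos h]
      have : (Finset.univ.filter fun u => f (Equiv.swap x' u x) = f u)
          = Finset.univ.filter fun u => f u = f x := by
        ext u
        simp only [Finset.mem_filter, Finset.mem_univ, true_and]
        by_cases hu : u = x
        · subst hu
          rw [Equiv.swap_apply_right]
          constructor <;> intro <;> simp [h.symm]
        · rw [Equiv.swap_apply_of_ne_of_ne hxx' (fun h => hu h.symm)]
          exact eq_comm
      rw [this, hfib]
    · rw [if_neg h]
      have : (Finset.univ.filter fun u => f (Equiv.swap x' u x) = f u)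
          = (Finset.univ.filter fun u => f u = f x).erase x := by
        ext u
        simp only [Finset.mem_filter, Finset.mem_univ, true_and, Finset.mem_erase]
        by_cases hu : u = x
        · subst hu
          rw [Equiv.swap_apply_right]
          constructor
          · intro hh; exact absurd hh.symm h
          · intro hh; exact absurd rfl hh.1
        · rw [Equiv.swap_apply_of_ne_of_ne hxx' (fun h => hu h.symm)]
          constructor
          · intro hh; exact ⟨hu, hh.symm⟩
          · intro hh; exact hh.2.symm
      rw [this, Finset.card_erase_of_mem (by simp), hfib]
  -- double counting
  have way1 : ∑ u : X, (F.filter fun f => f (Equiv.swap x' u x) = f u).card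
      = n * B.card := by
    rw [Finset.sum_congr rfl (fun u _ => key u), Finset.sum_const, Finset.card_univ,
      smul_eq_mul]
  have way2 : ∑ u : X, (F.filter fun f => f (Equiv.swap x' u x) = f u).card
      = ∑ f ∈ F, (Finset.univ.filter fun u => f (Equiv.swap x' u x) = f u).card := by
    simp only [Finset.card_filter]
    exact Finset.sum_comm
  have way3 : ∑ f ∈ F, (Finset.univ.filter fun u => f (Equiv.swap x' u x) = f u).card
      = B.card * k + (F.card - B.card) * (k - 1) := by
    have hneg : (F.filter fun f : X → Z => ¬ f x = f x').card = F.card - B.card := by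
      have h := Finset.card_filter_add_card_filter_not (s := F)
        (fun f : X → Z => f x = f x')
      exact eq_tsub_of_add_eq (by rw [add_comm]; exact h)
    rw [Finset.sum_congr rfl hcount, Finset.sum_ite, Finset.sum_const, Finset.sum_const,
      smul_eq_mul, smul_eq_mul, hneg]
  have eqn : n * B.card = B.card * k + (F.card - B.card) * (k - 1) := by
    rw [← way1, way2, way3]
  have hBF : B.card ≤ F.card := Finset.card_filter_le _ _
  have hn2 : 2 ≤ n := Fintype.one_lt_card_iff_nontrivial.mpr ⟨⟨x, x', hxx'⟩⟩
  -- conclude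
  show B.card * m ≤ F.card
  zify [hBF, hk1] at eqn
  have hnk' : (n : ℤ) = m * k := by exact_mod_cast hnk
  have hb0 : (0 : ℤ) ≤ (B.card : ℤ) := by exact Nat.cast_nonneg _
  have hN0 : (0 : ℤ) ≤ (F.card : ℤ) := by exact Nat.cast_nonneg _
  have hm1 : (1 : ℤ) ≤ (m : ℤ) := by exact_mod_cast hm
  have hk1' : (1 : ℤ) ≤ (k : ℤ) := by exact_mod_cast hk1
  have hn2' : (2 : ℤ) ≤ (n : ℤ) := by exact_mod_cast hn2
  have h1 : (B.card : ℤ) * (n - 1) = (F.card : ℤ) * (k - 1) := by linear_combination eqn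
  have goal' : (B.card : ℤ) * m ≤ (F.card : ℤ) := by
    nlinarith [h1, hnk', mul_nonneg hN0 (by linarith : (0:ℤ) ≤ (m:ℤ) - 1),
      mul_le_mul_of_nonneg_left h1.le (by linarith : (0:ℤ) ≤ (m:ℤ))]
  exact_mod_cast goal'
end

section
/- Let K be a finite field and L a field which is an algebra over K with a K-basis b indexed by Fin ℓ, and let k ≤ ℓ. For u ∈ L define f_u : L → (Fin k → K) by f_u(v) i := the coordinate of u·v in the basis b at index i (for i < ℓ via the inclusion Fin k → Fin ℓ). Then the family {f_u : u ∈ L, u ≠ 0} is regular and two-universal: (i) for every u ≠ 0 and every z : Fin k → K, |{v ∈ L : f_u(v) = z}| = |K|^(ℓ−k); and (ii) for all distinct v, v' ∈ L, |{u ∈ L : u ≠ 0 and f_u(v) = f_u(v')}| · |K|^k ≤ |L| − 1. -/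
open LinearMap

section Aux
variable {K L : Type*} [Field K] [Fintype K] [Field L] [Algebra K L]
variable {ℓ k : ℕ} (b : Module.Basis (Fin ℓ) K L) (hk : k ≤ ℓ)

/-- The projection onto the first `k` coordinates in the basis. -/
noncomputable def projMap : L →ₗ[K] (Fin k → K) :=
  (LinearMap.funLeft K K (Fin.castLE hk)).comp b.equivFun.toLinearMap

lemma projMap_apply (v : L) (i : Fin k) : projMap b hk v i = b.repr v (Fin.castLE hk i) := rfl

lemma projMap_surjective : Function.Surjective (projMap b hk) :=
  (LinearMap.funLeft_surjective_of_injective K K _ (Fin.castLE_injective hk)).comp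
    b.equivFun.surjective

lemma card_ker_projMap :
    Nat.card (LinearMap.ker (projMap b hk)) = Fintype.card K ^ (ℓ - k) := by
  have : FiniteDimensional K L := Module.Finite.of_basis b
  have h1 : Module.finrank K L = ℓ := by
    rw [Module.finrank_eq_card_basis b, Fintype.card_fin]
  have h2 := LinearMap.finrank_range_add_finrank_ker (projMap b hk)
  rw [LinearMap.range_eq_top.mpr (projMap_surjective b hk), finrank_top, h1,
    Module.finrank_pi] at h2
  simp only [Fintype.card_fin] at h2
  have hker : Module.finrank K (LinearMap.ker (projMap b hk)) = ℓ - k := by omega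
  have : Fintype L := Module.fintypeOfFintype b
  have : Fintype (LinearMap.ker (projMap b hk)) := Fintype.ofFinite _
  rw [Nat.card_eq_fintype_card, Module.card_eq_pow_finrank (K := K), hker]
end Aux

/-- For a finite field `K` and a field `L` that is a `K`-algebra with basis
`b : Fin ℓ → L`, and `k ≤ ℓ`, the family `{f_u : u ∈ L, u ≠ 0}` with
`f_u(v) i := (b.repr (u * v)) (Fin.castLE hk i)` is regular and two-universal. -/
theorem polynomial_hash_regular_two_universal (K L : Type*) [Field K] [Fintype K]
    [Field L] [Algebra K L] {ℓ k : ℕ} (b : Module.Basis (Fin ℓ) K L) (hk : k ≤ ℓ) :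
    (∀ u : L, u ≠ 0 → ∀ z : Fin k → K,
        Nat.card {v : L // (fun i : Fin k => b.repr (u * v) (Fin.castLE hk i)) = z}
          = Fintype.card K ^ (ℓ - k)) ∧
    (∀ v v' : L, v ≠ v' →
        Nat.card {u : L // u ≠ 0 ∧
            (fun i : Fin k => b.repr (u * v) (Fin.castLE hk i))
              = (fun i : Fin k => b.repr (u * v') (Fin.castLE hk i))}
          * Fintype.card K ^ k ≤ Nat.card L - 1) := by
  have : Fintype L := Module.fintypeOfFintype b
  set π := projMap b hk with hπ
  have hπa : ∀ v : L, (fun i : Fin k => b.repr v (Fin.castLE hk i)) = π v := fun v => rfl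
  constructor
  · intro u hu z
    -- fiber of v ↦ π (u * v) over z
    obtain ⟨w0, hw0⟩ := projMap_surjective b hk z
    -- v0 := u⁻¹ * w0 satisfies π (u * v0) = z
    have key : Nat.card {v : L // (fun i : Fin k => b.repr (u * v) (Fin.castLE hk i)) = z}
        = Nat.card (LinearMap.ker π) := by
      apply Nat.card_eq_of_bijective (fun v => ⟨u * v.1 - w0, by
        have hv := v.2
        rw [hπa] at hv
        simp [LinearMap.mem_ker, map_sub, hv, show π w0 = z from hw0]⟩)
      constructor
      · rintro ⟨v, hv⟩ ⟨v', hv'⟩ h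
        simp only [Subtype.mk.injEq, sub_left_injective.eq_iff] at h
        exact Subtype.ext (mul_left_cancel₀ hu h)
      · rintro ⟨w, hw⟩
        refine ⟨⟨u⁻¹ * (w + w0), ?_⟩, ?_⟩
        · rw [hπa]
          have : u * (u⁻¹ * (w + w0)) = w + w0 := by field_simp
          rw [this, map_add, hw0, LinearMap.mem_ker.mp hw, zero_add]
        · have : u * (u⁻¹ * (w + w0)) = w + w0 := by field_simp
          simp [this]
    rw [key, card_ker_projMap]
  · intro v v' hvv'
    set d := v - v' with hd
    have hdne : d ≠ 0 := sub_ne_zero.mpr hvv'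
    have key : Nat.card {u : L // u ≠ 0 ∧
            (fun i : Fin k => b.repr (u * v) (Fin.castLE hk i))
              = (fun i : Fin k => b.repr (u * v') (Fin.castLE hk i))}
        = Nat.card {w : LinearMap.ker π // w ≠ 0} := by
      apply Nat.card_eq_of_bijective (fun u => ⟨⟨u.1 * d, by
        have := u.2.2
        rw [hπa, hπa] at this
        have : π (u.1 * v) - π (u.1 * v') = 0 := by rw [this, sub_self]
        rw [LinearMap.mem_ker]
        rw [← map_sub] at this
        convert this using 2
        ring⟩, by
        simp only [ne_eq, Submodule.mk_eq_zero]
        exact mul_ne_zero u.2.1 hdne⟩)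
      constructor
      · rintro ⟨u, hu⟩ ⟨u', hu'⟩ h
        simp only [Subtype.mk.injEq, Submodule.mk_eq_zero] at h
        exact Subtype.ext (mul_right_cancel₀ hdne h)
      · rintro ⟨⟨w, hw⟩, hwne⟩
        simp only [ne_eq, Submodule.mk_eq_zero] at hwne
        refine ⟨⟨w * d⁻¹, ?_, ?_⟩, ?_⟩
        · exact mul_ne_zero hwne (inv_ne_zero hdne)
        · rw [hπa, hπa]
          have h1 : w * d⁻¹ * v - w * d⁻¹ * v' = w := by
            rw [← mul_sub, ← hd, mul_assoc, inv_mul_cancel₀ hdne, mul_one]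
          have := LinearMap.mem_ker.mp hw
          have h2 : π (w * d⁻¹ * v) - π (w * d⁻¹ * v') = 0 := by
            rw [← map_sub, h1, this]
          exact sub_eq_zero.mp h2
        · simp [mul_assoc, inv_mul_cancel₀ hdne]
    have hcard : Nat.card {w : LinearMap.ker π // w ≠ 0}
        = Fintype.card K ^ (ℓ - k) - 1 := by
      classical
      have : Fintype (LinearMap.ker π) := Fintype.ofFinite _
      rw [Nat.card_eq_fintype_card]
      simp only [ne_eq]
      rw [Fintype.card_subtype_compl, Fintype.card_subtype_eq (0 : LinearMap.ker π),
        ← Nat.card_eq_fintype_card, card_ker_projMap]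
    have hL : Nat.card L = Fintype.card K ^ ℓ := by
      rw [Nat.card_eq_fintype_card, Module.card_eq_pow_finrank (K := K),
        Module.finrank_eq_card_basis b, Fintype.card_fin]
    rw [key, hcard, hL]
    have hK : 1 ≤ Fintype.card K := Fintype.card_pos
    have h1 : 1 ≤ Fintype.card K ^ k := Nat.one_le_pow _ _ Fintype.card_pos
    have : (Fintype.card K ^ (ℓ - k)) * Fintype.card K ^ k = Fintype.card K ^ ℓ := by
      rw [← pow_add, Nat.sub_add_cancel hk]
    calc (Fintype.card K ^ (ℓ - k) - 1) * Fintype.card K ^ k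
        = Fintype.card K ^ (ℓ - k) * Fintype.card K ^ k - Fintype.card K ^ k := by
          rw [Nat.sub_mul, one_mul]
      _ ≤ Fintype.card K ^ ℓ - 1 := by rw [this]; omega
end

section
/- Let ρ, σ, ρ', σ' be density matrices on the same finite type, and set ε := C(ρ,ρ') + C(σ,σ'). Then F(ρ,σ) ≥ F(ρ',σ') − 2·√(1 − F(ρ',σ'))·ε − ε². -/
open Matrix
open scoped ComplexOrder

open Classical in
/-- The positive semidefinite square root of a PSD matrix (0 if not PSD). -/
noncomputable def psdSqrt {n : Type*} [Fintype n] [DecidableEq n] (A : Matrix n n ℂ) :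
    Matrix n n ℂ :=
  if h : A.PosSemidef then
    (h.1.eigenvectorUnitary : Matrix n n ℂ) * diagonal ((↑) ∘ (√·) ∘ h.1.eigenvalues) *
      (star h.1.eigenvectorUnitary : Matrix n n ℂ)
  else 0

/-- Fidelity F(ρ,σ) = (tr √(√σ ρ √σ))². -/
noncomputable def fid {n : Type*} [Fintype n] [DecidableEq n] (ρ σ : Matrix n n ℂ) : ℝ :=
  ((psdSqrt (psdSqrt σ * ρ * psdSqrt σ)).trace.re) ^ 2

/-- Purified distance C(ρ,σ) = √(1 − F(ρ,σ)). -/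
noncomputable def Cdist {n : Type*} [Fintype n] [DecidableEq n] (ρ σ : Matrix n n ℂ) : ℝ :=
  Real.sqrt (1 - fid ρ σ)

/-- A density matrix: positive semidefinite with unit trace. -/
def IsDensityMatrix {n : Type*} [Fintype n] (ρ : Matrix n n ℂ) : Prop :=
  ρ.PosSemidef ∧ ρ.trace = 1

/- ## Auxiliary material -/

open scoped InnerProductSpace ComplexConjugate

section ScalarLemmas

/-- Scalar sine triangle inequality. -/
lemma aux_sine_scalar {a b c : ℝ} (ha0 : 0 ≤ a) (hb0 : 0 ≤ b) (ha1 : a ≤ 1) (hb1 : b ≤ 1)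
    (hkey : a * b - Real.sqrt (1 - a^2) * Real.sqrt (1 - b^2) ≤ c) :
    Real.sqrt (1 - c^2) ≤ Real.sqrt (1 - a^2) + Real.sqrt (1 - b^2) := by
  set α := Real.sqrt (1 - a^2) with hα
  set β := Real.sqrt (1 - b^2) with hβ
  have hα0 : 0 ≤ α := Real.sqrt_nonneg _
  have hβ0 : 0 ≤ β := Real.sqrt_nonneg _
  have hα2 : α^2 = 1 - a^2 := Real.sq_sqrt (by nlinarith)
  have hβ2 : β^2 = 1 - b^2 := Real.sq_sqrt (by nlinarith)
  have e1 : (a*b - α*β)^2 + (a*β + b*α)^2 = (a^2 + α^2) * (b^2 + β^2) := by ring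
  have e2 : a*β + b*α ≤ α + β := by nlinarith
  have e3 : (a*β + b*α)^2 ≤ (α + β)^2 := by
    have h0 : 0 ≤ a*β + b*α := by positivity
    nlinarith
  have h1 : 1 - c^2 ≤ (α + β)^2 := by
    rcases le_or_gt (α * β) (a * b) with h | h
    · have hc0 : 0 ≤ a * b - α * β := by linarith
      have hcsq : (a*b - α*β)^2 ≤ c^2 := by nlinarith
      nlinarith
    · nlinarith [sq_nonneg (a - b)]
  calc Real.sqrt (1 - c^2) ≤ Real.sqrt ((α + β)^2) := Real.sqrt_le_sqrt h1
    _ = α + β := Real.sqrt_sq (by linarith)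

variable {E : Type*} [NormedAddCommGroup E] [InnerProductSpace ℂ E]

/-- Sine distance triangle inequality for unit vectors. -/
lemma aux_sine_triangle (u v w : E) (hu : ‖u‖ = 1) (hv : ‖v‖ = 1) (hw : ‖w‖ = 1) :
    Real.sqrt (1 - ‖⟪u, w⟫_ℂ‖^2) ≤
      Real.sqrt (1 - ‖⟪u, v⟫_ℂ‖^2) + Real.sqrt (1 - ‖⟪v, w⟫_ℂ‖^2) := by
  set a := ‖⟪u, v⟫_ℂ‖ with hadef
  set b := ‖⟪v, w⟫_ℂ‖ with hbdef
  set c := ‖⟪u, w⟫_ℂ‖ with hcdef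
  have ha0 : 0 ≤ a := norm_nonneg _
  have hb0 : 0 ≤ b := norm_nonneg _
  have ha1 : a ≤ 1 := by simpa [hu, hv] using norm_inner_le_norm (𝕜 := ℂ) u v
  have hb1 : b ≤ 1 := by simpa [hv, hw] using norm_inner_le_norm (𝕜 := ℂ) v w
  set u' := u - ⟪v, u⟫_ℂ • v with hu'
  set w' := w - ⟪v, w⟫_ℂ • v with hw'
  have hvv : ⟪v, v⟫_ℂ = 1 := by
    rw [inner_self_eq_norm_sq_to_K, hv]; norm_num
  have huu : ⟪u, u⟫_ℂ = 1 := by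
    rw [inner_self_eq_norm_sq_to_K, hu]; norm_num
  have hww : ⟪w, w⟫_ℂ = 1 := by
    rw [inner_self_eq_norm_sq_to_K, hw]; norm_num
  have hu'v : ⟪u', v⟫_ℂ = 0 := by
    simp [hu', inner_sub_left, inner_smul_left, hvv, inner_conj_symm, hv]
  have hdecomp : ⟪u, w⟫_ℂ = ⟪u, v⟫_ℂ * ⟪v, w⟫_ℂ + ⟪u', w'⟫_ℂ := by
    have h3 : ⟪u', w'⟫_ℂ = ⟪u', w⟫_ℂ := by
      rw [hw', inner_sub_right, inner_smul_right, hu'v, mul_zero, sub_zero]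
    rw [h3, hu', inner_sub_left, inner_smul_left, inner_conj_symm]
    ring
  have key_norm : ∀ x : E, ⟪x, x⟫_ℂ = 1 →
      ‖x - ⟪v, x⟫_ℂ • v‖^2 = 1 - ‖⟪v, x⟫_ℂ‖^2 := by
    intro x hx
    have hexp : ⟪x - ⟪v, x⟫_ℂ • v, x - ⟪v, x⟫_ℂ • v⟫_ℂ
        = 1 - ⟪v, x⟫_ℂ * (starRingEnd ℂ) ⟪v, x⟫_ℂ := by
      rw [inner_sub_sub_self, inner_smul_right, inner_smul_left, inner_smul_left,
        inner_smul_right, hvv, hx]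
      rw [← inner_conj_symm x v]
      ring
    have := inner_self_eq_norm_sq (𝕜 := ℂ) (x - ⟪v, x⟫_ℂ • v)
    rw [hexp] at this
    rw [← this, Complex.mul_conj]
    simp [Complex.normSq_eq_norm_sq, ← Complex.ofReal_pow]
  have hnu' : ‖u'‖^2 = 1 - a^2 := by
    rw [hu', key_norm u huu, norm_inner_symm]
  have hnw' : ‖w'‖^2 = 1 - b^2 := by
    rw [hw', key_norm w hww]
  have hkey : a * b - Real.sqrt (1 - a^2) * Real.sqrt (1 - b^2) ≤ c := by
    have h5 : ‖⟪u', w'⟫_ℂ‖ ≤ ‖u'‖ * ‖w'‖ := norm_inner_le_norm _ _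
    have h6 : ‖u'‖ = Real.sqrt (1 - a^2) := by
      rw [← hnu', Real.sqrt_sq (norm_nonneg _)]
    have h7 : ‖w'‖ = Real.sqrt (1 - b^2) := by
      rw [← hnw', Real.sqrt_sq (norm_nonneg _)]
    have h8 : a * b - ‖⟪u', w'⟫_ℂ‖ ≤ c := by
      have h10 : ‖⟪u, v⟫_ℂ * ⟪v, w⟫_ℂ‖ = a * b := norm_mul _ _
      calc a * b - ‖⟪u', w'⟫_ℂ‖ = ‖⟪u, v⟫_ℂ * ⟪v, w⟫_ℂ‖ - ‖-⟪u', w'⟫_ℂ‖ := by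
            rw [h10, norm_neg]
        _ ≤ ‖⟪u, v⟫_ℂ * ⟪v, w⟫_ℂ - (- ⟪u', w'⟫_ℂ)‖ := norm_sub_norm_le _ _
        _ = c := by rw [sub_neg_eq_add, ← hdecomp]
    rw [← h6, ← h7]
    linarith
  exact aux_sine_scalar ha0 hb0 ha1 hb1 hkey

end ScalarLemmas

section MatrixLemmas

variable {n : Type*} [Fintype n] [DecidableEq n]

/-- Embedding of matrices into Euclidean space (Frobenius). -/
noncomputable def matE (M : Matrix n n ℂ) : EuclideanSpace ℂ (n × n) :=
  (WithLp.equiv 2 _).symm (fun p => M p.1 p.2)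

lemma inner_matE (M N : Matrix n n ℂ) : ⟪matE M, matE N⟫_ℂ = (Mᴴ * N).trace := by
  simp only [matE, PiLp.inner_apply, RCLike.inner_apply, WithLp.equiv_symm_apply, PiLp.toLp_apply,
    Matrix.trace, Matrix.diag, Matrix.mul_apply, Matrix.conjTranspose_apply]
  rw [Finset.sum_comm]
  rw [← Finset.sum_product']
  exact Finset.sum_congr rfl fun _ _ => mul_comm _ _

lemma norm_matE_sq (M : Matrix n n ℂ) : ‖matE M‖^2 = (Mᴴ * M).trace.re := by
  have := inner_self_eq_norm_sq (𝕜 := ℂ) (matE M)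
  rw [inner_matE] at this
  rw [← this]
  rfl

lemma norm_matE_one {M : Matrix n n ℂ} (h : (Mᴴ * M).trace = 1) : ‖matE M‖ = 1 := by
  have h2 : ‖matE M‖^2 = 1 := by rw [norm_matE_sq, h]; rfl
  nlinarith [norm_nonneg (matE M)]

lemma aux_psd_diag_nonneg {P : Matrix n n ℂ} (hP : P.PosSemidef) (i : n) :
    0 ≤ P i i := by
  exact hP.diag_nonneg

lemma aux_psd_trace_eq_re {P : Matrix n n ℂ} (hP : P.PosSemidef) :
    P.trace = (P.trace.re : ℂ) := by
  have h1 : star P.trace = P.trace := by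
    rw [← Matrix.trace_conjTranspose, hP.1]
  exact (Complex.conj_eq_iff_re.mp h1).symm

lemma aux_psd_trace_re_nonneg {P : Matrix n n ℂ} (hP : P.PosSemidef) :
    0 ≤ P.trace.re := by
  have h : P.trace = ∑ i, P i i := rfl
  rw [h, Complex.re_sum]
  apply Finset.sum_nonneg
  intro i _
  have := aux_psd_diag_nonneg hP i
  rw [Complex.le_def] at this
  simpa using this.1

lemma psdSqrt_form_psd {A : Matrix n n ℂ} (h : A.PosSemidef) :
    ((h.1.eigenvectorUnitary : Matrix n n ℂ) * diagonal (Complex.ofReal ∘ (fun x => √x) ∘ h.1.eigenvalues) *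
      (star h.1.eigenvectorUnitary : Matrix n n ℂ)).PosSemidef := by
  have hd : (diagonal (Complex.ofReal ∘ (fun x => √x) ∘ h.1.eigenvalues) : Matrix n n ℂ).PosSemidef :=
    posSemidef_diagonal_iff.mpr fun i => by
      simp only [Function.comp_apply]
      exact Complex.zero_le_real.mpr (Real.sqrt_nonneg _)
  rw [Matrix.star_eq_conjTranspose]
  exact hd.mul_mul_conjTranspose_same _

lemma psdSqrt_herm (A : Matrix n n ℂ) : (psdSqrt A)ᴴ = psdSqrt A := by
  unfold psdSqrt
  split
  · rename_i h
    exact (psdSqrt_form_psd h).1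
  · exact conjTranspose_zero

lemma psdSqrt_posSemidef {A : Matrix n n ℂ} (h : A.PosSemidef) :
    (psdSqrt A).PosSemidef := by
  rw [psdSqrt, dif_pos h]; exact psdSqrt_form_psd h

lemma psdSqrt_mul_self {A : Matrix n n ℂ} (h : A.PosSemidef) :
    psdSqrt A * psdSqrt A = A := by
  rw [psdSqrt, dif_pos h]
  set W : Matrix n n ℂ := (h.1.eigenvectorUnitary : Matrix n n ℂ) with hWdef
  have hW1' : star W * W = 1 := (Matrix.mem_unitaryGroup_iff').mp h.1.eigenvectorUnitary.2
  have hspec : A = W * diagonal (Complex.ofReal ∘ h.1.eigenvalues) * star W :=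
    h.1.spectral_theorem
  calc W * diagonal (Complex.ofReal ∘ (fun x => √x) ∘ h.1.eigenvalues) * star W *
        (W * diagonal (Complex.ofReal ∘ (fun x => √x) ∘ h.1.eigenvalues) * star W)
      = W * diagonal (Complex.ofReal ∘ (fun x => √x) ∘ h.1.eigenvalues) * (star W * W) *
          diagonal (Complex.ofReal ∘ (fun x => √x) ∘ h.1.eigenvalues) * star W := by noncomm_ring
    _ = W * (diagonal (Complex.ofReal ∘ (fun x => √x) ∘ h.1.eigenvalues) *
          diagonal (Complex.ofReal ∘ (fun x => √x) ∘ h.1.eigenvalues)) * star W := by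
        rw [hW1']; noncomm_ring
    _ = A := by
        rw [Matrix.diagonal_mul_diagonal]
        conv_rhs => rw [hspec]
        congr 3
        funext i
        simp [← Complex.ofReal_mul, Real.mul_self_sqrt (h.eigenvalues_nonneg i)]

/-- The core matrix identity: `√b a √b = (√a √b)ᴴ (√a √b)` for `a` PSD. -/
lemma fid_rewrite {a : Matrix n n ℂ} (b : Matrix n n ℂ) (ha : a.PosSemidef) :
    psdSqrt b * a * psdSqrt b = (psdSqrt a * psdSqrt b)ᴴ * (psdSqrt a * psdSqrt b) := by
  rw [conjTranspose_mul, psdSqrt_herm, psdSqrt_herm]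
  calc psdSqrt b * a * psdSqrt b
      = psdSqrt b * (psdSqrt a * psdSqrt a) * psdSqrt b := by rw [psdSqrt_mul_self ha]
    _ = psdSqrt b * psdSqrt a * (psdSqrt a * psdSqrt b) := by noncomm_ring

set_option maxHeartbeats 1000000 in
/-- Polar decomposition for square complex matrices. -/
lemma exists_polar (A : Matrix n n ℂ) :
    ∃ U : Matrix n n ℂ, U ∈ Matrix.unitaryGroup n ℂ ∧ A = U * psdSqrt (Aᴴ * A) := by
  have hAA : (Aᴴ * A).PosSemidef := posSemidef_conjTranspose_mul_self A
  set W : Matrix n n ℂ := (hAA.1.eigenvectorUnitary : Matrix n n ℂ) with hWdef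
  set d : n → ℝ := hAA.1.eigenvalues with hddef
  have hd0 : ∀ i, 0 ≤ d i := fun i => hAA.eigenvalues_nonneg i
  have hWmem : W ∈ Matrix.unitaryGroup n ℂ := hAA.1.eigenvectorUnitary.2
  have hW1 : W * star W = 1 := (Matrix.mem_unitaryGroup_iff).mp hWmem
  have hW1' : star W * W = 1 := (Matrix.mem_unitaryGroup_iff').mp hWmem
  have hspec : Aᴴ * A = W * diagonal (Complex.ofReal ∘ d) * star W := hAA.1.spectral_theorem
  have hdiagpsd : (diagonal ((↑) ∘ Real.sqrt ∘ d) : Matrix n n ℂ).PosSemidef := by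
    apply Matrix.PosSemidef.diagonal
    intro i
    simp only [Function.comp_apply]
    rw [Complex.le_def]
    constructor
    · simp [Real.sqrt_nonneg]
    · simp
  have hP : psdSqrt (Aᴴ * A) = W * diagonal ((↑) ∘ Real.sqrt ∘ d) * star W := by
    rw [psdSqrt, dif_pos hAA]
  set B : Matrix n n ℂ := A * W with hBdef
  have hBB : Bᴴ * B = diagonal (Complex.ofReal ∘ d) := by
    have : Bᴴ * B = star W * (Aᴴ * A) * W := by
      rw [hBdef, conjTranspose_mul, Matrix.star_eq_conjTranspose]
      noncomm_ring
    rw [this, hspec]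
    calc star W * (W * diagonal (Complex.ofReal ∘ d) * star W) * W
        = (star W * W) * diagonal (Complex.ofReal ∘ d) * (star W * W) := by noncomm_ring
      _ = diagonal (Complex.ofReal ∘ d) := by rw [hW1']; simp
  have hBcol : ∀ j k, (∑ i, conj (B i j) * B i k) = if j = k then (d j : ℂ) else 0 := by
    intro j k
    have := congrFun (congrFun hBB j) k
    simpa [Matrix.mul_apply, Matrix.conjTranspose_apply, Matrix.diagonal_apply,
      Function.comp] using this
  have hBzero : ∀ j, d j = 0 → ∀ i, B i j = 0 := by
    intro j hj i
    have h1 : ∑ i, (starRingEnd ℂ) (B i j) * B i j = 0 := by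
      simpa [hj] using hBcol j j
    have h1' := congrArg Complex.re h1
    rw [Complex.re_sum, Complex.zero_re] at h1'
    have h2 : ∑ i, Complex.normSq (B i j) = 0 := by
      rw [← h1']
      apply Finset.sum_congr rfl
      intro i _
      rw [mul_comm, Complex.mul_conj, Complex.ofReal_re]
    have h3 : ∀ i ∈ Finset.univ, (0:ℝ) ≤ Complex.normSq (B i j) := fun i _ => Complex.normSq_nonneg _
    have h4 := (Finset.sum_eq_zero_iff_of_nonneg h3).mp h2 i (Finset.mem_univ i)
    exact Complex.normSq_eq_zero.mp h4
  set v : n → EuclideanSpace ℂ n :=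
    fun j => (WithLp.equiv 2 _).symm (fun i => ((Real.sqrt (d j) : ℂ))⁻¹ * B i j) with hvdef
  have hvon : Orthonormal ℂ ({j | d j ≠ 0}.restrict v) := by
    rw [orthonormal_iff_ite]
    intro j k
    have hinner : ⟪v (j:n), v (k:n)⟫_ℂ =
        ((Real.sqrt (d j) : ℂ))⁻¹ * ((Real.sqrt (d k) : ℂ))⁻¹ *
          (if (j:n) = (k:n) then (d (j:n) : ℂ) else 0) := by
      simp only [hvdef, PiLp.inner_apply, RCLike.inner_apply, WithLp.equiv_symm_apply, PiLp.toLp_apply]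
      rw [← hBcol]
      rw [Finset.mul_sum]
      congr 1
      ext i
      rw [_root_.map_mul, map_inv₀, Complex.conj_ofReal]
      ring
    show ⟪v (j:n), v (k:n)⟫_ℂ = _
    rcases eq_or_ne j k with h | h
    · subst h
      rw [hinner, if_pos rfl, if_pos rfl]
      have hdj : d (j:n) ≠ 0 := j.2
      have hdj' : 0 < d (j:n) := lt_of_le_of_ne (hd0 _) (Ne.symm hdj)
      have hsq : (Real.sqrt (d j) : ℂ) * (Real.sqrt (d j) : ℂ) = (d (j:n) : ℂ) := by
        rw [← Complex.ofReal_mul, Real.mul_self_sqrt (hd0 _)]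
      have hs0 : (Real.sqrt (d j) : ℂ) ≠ 0 := by
        simp only [Complex.ofReal_ne_zero]
        positivity
      rw [← hsq]
      field_simp
    · have h' : (j:n) ≠ (k:n) := fun hc => h (Subtype.ext hc)
      rw [hinner, if_neg h', if_neg h]
      ring
  obtain ⟨b, hb⟩ := hvon.exists_orthonormalBasis_extension_of_card_eq finrank_euclideanSpace
  set U₀ : Matrix n n ℂ := Matrix.of (fun i j => b j i) with hU₀def
  have hU₀mem : U₀ ∈ Matrix.unitaryGroup n ℂ := by
    rw [Matrix.mem_unitaryGroup_iff']
    ext j k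
    have hbon := orthonormal_iff_ite.mp b.orthonormal j k
    simp only [PiLp.inner_apply, RCLike.inner_apply] at hbon
    simp only [Matrix.mul_apply, Matrix.star_eq_conjTranspose, Matrix.conjTranspose_apply,
      hU₀def, Matrix.of_apply, Matrix.one_apply, Complex.star_def]
    rw [← hbon]
    exact Finset.sum_congr rfl fun _ _ => mul_comm _ _
  have hAW : A * W = U₀ * diagonal ((↑) ∘ Real.sqrt ∘ d) := by
    ext i j
    rw [Matrix.mul_diagonal]
    rcases eq_or_ne (d j) 0 with hj | hj
    · show B i j = _
      rw [hBzero j hj i]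
      simp [Function.comp, hj]
    · have hbj : b j = v j := hb j hj
      show B i j = _
      simp only [hU₀def, Matrix.of_apply]
      rw [hbj, hvdef]
      simp only [WithLp.equiv_symm_apply, PiLp.toLp_apply, Function.comp_apply]
      have hdj' : 0 < d j := lt_of_le_of_ne (hd0 _) (Ne.symm hj)
      have hs0 : (Real.sqrt (d j) : ℂ) ≠ 0 := by
        simp only [Complex.ofReal_ne_zero]
        positivity
      field_simp
  refine ⟨U₀ * star W, ?_, ?_⟩
  · rw [Matrix.mem_unitaryGroup_iff]
    rw [StarMul.star_mul, star_star]
    calc U₀ * star W * (W * star U₀) = U₀ * (star W * W) * star U₀ := by noncomm_ring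
      _ = 1 := by
          rw [hW1', mul_one]
          rw [Matrix.mem_unitaryGroup_iff'] at hU₀mem
          rw [← mul_eq_one_comm]
          exact hU₀mem
  · rw [hP]
    have hfin : U₀ * star W * (W * diagonal ((↑) ∘ Real.sqrt ∘ d) * star W)
        = U₀ * diagonal ((↑) ∘ Real.sqrt ∘ d) * star W := by
      calc U₀ * star W * (W * diagonal ((↑) ∘ Real.sqrt ∘ d) * star W)
          = U₀ * (star W * W) * (diagonal ((↑) ∘ Real.sqrt ∘ d) * star W) := by noncomm_ring
        _ = U₀ * diagonal ((↑) ∘ Real.sqrt ∘ d) * star W := by rw [hW1']; noncomm_ring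
    rw [hfin, ← hAW, Matrix.mul_assoc, hW1, Matrix.mul_one]

/-- Duality bound: `‖tr (V A)‖ ≤ tr √(AᴴA)` for `V` unitary. -/
lemma aux_trace_bound {V : Matrix n n ℂ} (A : Matrix n n ℂ)
    (hV : V ∈ Matrix.unitaryGroup n ℂ) :
    ‖(V * A).trace‖ ≤ (psdSqrt (Aᴴ * A)).trace.re := by
  obtain ⟨U, hU, hA⟩ := exists_polar A
  have hPpsd : (psdSqrt (Aᴴ * A)).PosSemidef :=
    psdSqrt_posSemidef (posSemidef_conjTranspose_mul_self A)
  set P : Matrix n n ℂ := psdSqrt (Aᴴ * A) with hPdef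
  set W : Matrix n n ℂ := V * U with hWdef
  have hWmem : W ∈ Matrix.unitaryGroup n ℂ := mul_mem hV hU
  have hW1' : star W * W = 1 := (Matrix.mem_unitaryGroup_iff').mp hWmem
  have hVA : V * A = W * P := by rw [hA, hWdef, Matrix.mul_assoc]
  set S : Matrix n n ℂ := psdSqrt P with hSdef
  have hSS : S * S = P := psdSqrt_mul_self hPpsd
  have hSherm : Sᴴ = S := psdSqrt_herm P
  have e2a : (S * star W)ᴴ = W * S := by
    rw [conjTranspose_mul, hSherm, Matrix.star_eq_conjTranspose, conjTranspose_conjTranspose]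
  have e1 : (S * star W)ᴴ * S = W * P := by
    rw [e2a, Matrix.mul_assoc, hSS]
  have e2 : (S * star W)ᴴ * (S * star W) = W * (P * star W) := by
    rw [e2a, ← hSS]
    noncomm_ring
  have hkey : (W * P).trace = ⟪matE (S * star W), matE S⟫_ℂ := by
    rw [inner_matE, e1]
  have hn1 : ‖matE (S * star W)‖^2 = P.trace.re := by
    rw [norm_matE_sq, e2]
    rw [Matrix.trace_mul_comm, Matrix.mul_assoc, hW1', Matrix.mul_one]
  have hn2 : ‖matE S‖^2 = P.trace.re := by
    rw [norm_matE_sq, hSherm, hSS]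
  have hcs : ‖⟪matE (S * star W), matE S⟫_ℂ‖ ≤ ‖matE (S * star W)‖ * ‖matE S‖ :=
    norm_inner_le_norm _ _
  have h0 : 0 ≤ P.trace.re := aux_psd_trace_re_nonneg hPpsd
  rw [hVA, hkey]
  nlinarith [norm_nonneg (matE (S * star W)), norm_nonneg (matE S)]

/-- Achievability: there is a unitary `U` with `tr (U A) = tr √(AᴴA)`. -/
lemma aux_trace_achieve (A : Matrix n n ℂ) :
    ∃ U : Matrix n n ℂ, U ∈ Matrix.unitaryGroup n ℂ ∧
      A = U * psdSqrt (Aᴴ * A) ∧ (star U * A).trace = (psdSqrt (Aᴴ * A)).trace := by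
  obtain ⟨U, hU, hA⟩ := exists_polar A
  refine ⟨U, hU, hA, ?_⟩
  conv_lhs => rw [hA]
  rw [← Matrix.mul_assoc, (Matrix.mem_unitaryGroup_iff').mp hU, Matrix.one_mul]

end MatrixLemmas

lemma aux_purif_norm {n : Type*} [Fintype n] [DecidableEq n]
    {a V : Matrix n n ℂ} (ha : a.PosSemidef) (hat : a.trace = 1)
    (hV : V ∈ Matrix.unitaryGroup n ℂ) : ‖matE (psdSqrt a * V)‖ = 1 := by
  apply norm_matE_one
  have e : (psdSqrt a * V)ᴴ * (psdSqrt a * V) = star V * (a * V) := by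
    rw [conjTranspose_mul, psdSqrt_herm, Matrix.star_eq_conjTranspose]
    calc Vᴴ * psdSqrt a * (psdSqrt a * V) = Vᴴ * (psdSqrt a * psdSqrt a * V) := by noncomm_ring
      _ = Vᴴ * (a * V) := by rw [psdSqrt_mul_self ha]
  rw [e, Matrix.trace_mul_comm, Matrix.mul_assoc, (Matrix.mem_unitaryGroup_iff).mp hV,
    Matrix.mul_one, hat]

set_option maxHeartbeats 1000000 in
/-- triangle-type inequality for fidelity: with
`ε = C(ρ,ρ') + C(σ,σ')`, we have `F(ρ,σ) ≥ F(ρ',σ') − 2√(1 − F(ρ',σ'))·ε − ε²`. -/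
theorem fidelity_triangle_inequality {n : Type*} [Fintype n] [DecidableEq n]
    (ρ σ ρ' σ' : Matrix n n ℂ)
    (hρ : IsDensityMatrix ρ) (hσ : IsDensityMatrix σ)
    (hρ' : IsDensityMatrix ρ') (hσ' : IsDensityMatrix σ')
    (ε : ℝ) (hε : ε = Cdist ρ ρ' + Cdist σ σ') :
    fid ρ σ ≥ fid ρ' σ' - 2 * Real.sqrt (1 - fid ρ' σ') * ε - ε ^ 2 := by
  obtain ⟨hρp, hρt⟩ := hρ
  obtain ⟨hσp, hσt⟩ := hσ
  obtain ⟨hρ'p, hρ't⟩ := hρ'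
  obtain ⟨hσ'p, hσ't⟩ := hσ'
  set S1 := psdSqrt ρ with hS1
  set S2 := psdSqrt σ with hS2
  set S3 := psdSqrt ρ' with hS3
  set S4 := psdSqrt σ' with hS4
  set A₀ := S1 * S2 with hA₀def
  set A₁ := S1 * S3 with hA₁def
  set A₂ := S3 * S4 with hA₂def
  set A₃ := S2 * S4 with hA₃def
  obtain ⟨U₁, hU₁, hA₁, htr₁⟩ := aux_trace_achieve A₁
  obtain ⟨U₂, hU₂, hA₂, htr₂⟩ := aux_trace_achieve A₂
  obtain ⟨U₃, hU₃, hA₃, htr₃⟩ := aux_trace_achieve A₃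
  set P₀ := psdSqrt (A₀ᴴ * A₀) with hP₀def
  set P₁ := psdSqrt (A₁ᴴ * A₁) with hP₁def
  set P₂ := psdSqrt (A₂ᴴ * A₂) with hP₂def
  set P₃ := psdSqrt (A₃ᴴ * A₃) with hP₃def
  have hP₀psd : P₀.PosSemidef := psdSqrt_posSemidef (posSemidef_conjTranspose_mul_self A₀)
  have hP₁psd : P₁.PosSemidef := psdSqrt_posSemidef (posSemidef_conjTranspose_mul_self A₁)
  have hP₂psd : P₂.PosSemidef := psdSqrt_posSemidef (posSemidef_conjTranspose_mul_self A₂)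
  have hP₃psd : P₃.PosSemidef := psdSqrt_posSemidef (posSemidef_conjTranspose_mul_self A₃)
  set r₀ := P₀.trace.re with hr₀def
  set r₁ := P₁.trace.re with hr₁def
  set r₂ := P₂.trace.re with hr₂def
  set r₃ := P₃.trace.re with hr₃def
  have hr₀0 : 0 ≤ r₀ := aux_psd_trace_re_nonneg hP₀psd
  have hr₁0 : 0 ≤ r₁ := aux_psd_trace_re_nonneg hP₁psd
  have hr₂0 : 0 ≤ r₂ := aux_psd_trace_re_nonneg hP₂psd
  have hr₃0 : 0 ≤ r₃ := aux_psd_trace_re_nonneg hP₃psd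
  -- fidelity in terms of the rᵢ
  have hfid0 : fid ρ σ = r₀^2 := by
    rw [fid, fid_rewrite σ hρp]
  have hfid1 : fid ρ ρ' = r₁^2 := by
    rw [fid, fid_rewrite ρ' hρp]
  have hfid2 : fid ρ' σ' = r₂^2 := by
    rw [fid, fid_rewrite σ' hρ'p]
  have hfid3 : fid σ σ' = r₃^2 := by
    rw [fid, fid_rewrite σ' hσp]
  -- purification vectors
  set x := S1 * U₁ with hxdef
  set y := S3 * (1 : Matrix n n ℂ) with hydef
  set z := S4 * star U₂ with hzdef
  set w := S2 * (U₃ * star U₂) with hwdef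
  have hx1 : ‖matE x‖ = 1 := aux_purif_norm hρp hρt hU₁
  have hy1 : ‖matE y‖ = 1 := aux_purif_norm hρ'p hρ't (one_mem _)
  have hz1 : ‖matE z‖ = 1 := aux_purif_norm hσ'p hσ't (Unitary.star_mem hU₂)
  have hw1 : ‖matE w‖ = 1 := aux_purif_norm hσp hσt (mul_mem hU₃ (Unitary.star_mem hU₂))
  -- inner products
  have hxy : ⟪matE x, matE y⟫_ℂ = P₁.trace := by
    rw [inner_matE]
    have e : xᴴ * y = star U₁ * A₁ := by
      rw [hxdef, hydef, conjTranspose_mul, psdSqrt_herm, Matrix.mul_one,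
        Matrix.star_eq_conjTranspose, Matrix.mul_assoc]
    rw [e, htr₁]
  have hyz : ⟪matE y, matE z⟫_ℂ = P₂.trace := by
    rw [inner_matE]
    have e : yᴴ * z = U₂ * P₂ * star U₂ := by
      rw [hydef, hzdef, conjTranspose_mul, psdSqrt_herm, conjTranspose_one, Matrix.one_mul,
        ← Matrix.mul_assoc, ← hA₂def, hA₂]
    rw [e, Matrix.trace_mul_comm, ← Matrix.mul_assoc,
      (Matrix.mem_unitaryGroup_iff').mp hU₂, Matrix.one_mul]
  have hwz : ⟪matE w, matE z⟫_ℂ = P₃.trace := by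
    rw [inner_matE]
    have e : wᴴ * z = U₂ * P₃ * star U₂ := by
      rw [hwdef, hzdef, conjTranspose_mul, psdSqrt_herm]
      have hstw : (U₃ * star U₂)ᴴ = U₂ * star U₃ := by
        rw [← Matrix.star_eq_conjTranspose, StarMul.star_mul, star_star]
      rw [hstw]
      calc U₂ * star U₃ * S2 * (S4 * star U₂)
          = U₂ * (star U₃ * (S2 * S4)) * star U₂ := by noncomm_ring
        _ = U₂ * P₃ * star U₂ := by
            rw [← hA₃def]
            conv_lhs => rw [hA₃]
            have h9 : star U₃ * (U₃ * P₃) = P₃ := by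
              rw [← Matrix.mul_assoc, (Matrix.mem_unitaryGroup_iff').mp hU₃, Matrix.one_mul]
            rw [h9]
    rw [e, Matrix.trace_mul_comm, ← Matrix.mul_assoc,
      (Matrix.mem_unitaryGroup_iff').mp hU₂, Matrix.one_mul]
  -- bound on the outer inner product
  have hVfmem : U₃ * star U₂ * star U₁ ∈ Matrix.unitaryGroup n ℂ :=
    mul_mem (mul_mem hU₃ (Unitary.star_mem hU₂)) (Unitary.star_mem hU₁)
  have hxw : ⟪matE x, matE w⟫_ℂ = ((U₃ * star U₂ * star U₁) * A₀).trace := by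
    rw [inner_matE]
    have e : xᴴ * w = star U₁ * A₀ * (U₃ * star U₂) := by
      rw [hxdef, hwdef, conjTranspose_mul, psdSqrt_herm, Matrix.star_eq_conjTranspose,
        hA₀def]
      noncomm_ring
    rw [e, Matrix.trace_mul_comm]
    congr 1
    noncomm_ring
  have hc_le : ‖⟪matE x, matE w⟫_ℂ‖ ≤ r₀ := by
    rw [hxw]
    exact aux_trace_bound A₀ hVfmem
  -- norms of inner products
  have hnxy : ‖⟪matE x, matE y⟫_ℂ‖ = r₁ := by
    rw [hxy, aux_psd_trace_eq_re hP₁psd, Complex.norm_real, Real.norm_of_nonneg hr₁0]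
  have hnyz : ‖⟪matE y, matE z⟫_ℂ‖ = r₂ := by
    rw [hyz, aux_psd_trace_eq_re hP₂psd, Complex.norm_real, Real.norm_of_nonneg hr₂0]
  have hnzw : ‖⟪matE z, matE w⟫_ℂ‖ = r₃ := by
    rw [norm_inner_symm, hwz, aux_psd_trace_eq_re hP₃psd, Complex.norm_real,
      Real.norm_of_nonneg hr₃0]
  -- fid ρ' σ' ≤ 1
  have hr₂1 : r₂ ≤ 1 := by
    have := norm_inner_le_norm (𝕜 := ℂ) (matE y) (matE z)
    rw [hnyz, hy1, hz1, mul_one] at this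
    exact this
  have hfid2' : fid ρ' σ' ≤ 1 := by rw [hfid2]; nlinarith
  -- triangle inequalities
  have t1 := aux_sine_triangle (matE x) (matE y) (matE w) hx1 hy1 hw1
  have t2 := aux_sine_triangle (matE y) (matE z) (matE w) hy1 hz1 hw1
  rw [hnxy] at t1
  rw [hnyz, hnzw] at t2
  -- from c ≤ r₀
  set c := ‖⟪matE x, matE w⟫_ℂ‖ with hcdef
  have hc0 : 0 ≤ c := norm_nonneg _
  have hstep : Real.sqrt (1 - fid ρ σ) ≤ Real.sqrt (1 - c^2) := by
    apply Real.sqrt_le_sqrt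
    rw [hfid0]
    nlinarith
  have hchain : Real.sqrt (1 - fid ρ σ) ≤
      Real.sqrt (1 - fid ρ ρ') + Real.sqrt (1 - fid ρ' σ') + Real.sqrt (1 - fid σ σ') := by
    rw [hfid1, hfid2, hfid3]
    calc Real.sqrt (1 - fid ρ σ) ≤ Real.sqrt (1 - c^2) := hstep
      _ ≤ Real.sqrt (1 - r₁^2) + Real.sqrt (1 - ‖⟪matE y, matE w⟫_ℂ‖^2) := t1
      _ ≤ Real.sqrt (1 - r₁^2) + (Real.sqrt (1 - r₂^2) + Real.sqrt (1 - r₃^2)) := by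
          linarith
      _ = Real.sqrt (1 - r₁^2) + Real.sqrt (1 - r₂^2) + Real.sqrt (1 - r₃^2) := by ring
  -- final arithmetic
  have hsum : Real.sqrt (1 - fid ρ σ) ≤ Real.sqrt (1 - fid ρ' σ') + ε := by
    rw [hε, Cdist, Cdist]
    linarith
  have hrhs0 : 0 ≤ Real.sqrt (1 - fid ρ' σ') + ε := by
    have hε0 : 0 ≤ ε := by
      rw [hε, Cdist, Cdist]
      positivity
    positivity
  have hF : 1 - fid ρ σ ≤ (Real.sqrt (1 - fid ρ' σ') + ε)^2 := by
    rcases le_or_gt (1 - fid ρ σ) 0 with h | h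
    · nlinarith
    · have h1 : (Real.sqrt (1 - fid ρ σ))^2 = 1 - fid ρ σ := Real.sq_sqrt h.le
      nlinarith [Real.sqrt_nonneg (1 - fid ρ σ)]
  have hC2 : (Real.sqrt (1 - fid ρ' σ'))^2 = 1 - fid ρ' σ' := Real.sq_sqrt (by linarith)
  nlinarith [Real.sqrt_nonneg (1 - fid ρ' σ')]
end
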